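/- arXiv:1002.0562 — 2 statements merged into one kernel-verified Lean document; each statement's English description precedes it below -/
import Mathlib

section
/- Let H be a loopless multigraph on vertex set {1,2,...,s} (with the natural order). Define the left degree of a vertex j as the number of edges {i,j} with i < j and the right degree as the number of edges {i,j} with i > j. Suppose every vertex of H has left degree at most k+1 and right degree at most k+1. Define the thickness t(H) as the maximum over j = 2,...,s-1 of the number of edges {a,b} of H with a < j < b. Then H can be extended (by adding edges) to a multigraph H-bar such that: (i) every vertex j ≠ 1 has left degree at least k+1 and every vertex j ≠ s has right degree at least k+1; and (ii) the total number of edges of H-bar is at most (k+1)(s-1) + t(H). -/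
/-- Left degree of vertex `j`: number of edges `{i,j}` with `i < j`.
Edges of the multigraph are stored as ordered pairs `(i, j)` with `i < j`. -/
def leftDeg (E : Multiset (ℕ × ℕ)) (j : ℕ) : ℕ :=
  (E.filter (fun e => e.2 = j)).card

/-- Right degree of vertex `j`: number of edges `{j,i}` with `i > j`. -/
def rightDeg (E : Multiset (ℕ × ℕ)) (j : ℕ) : ℕ :=
  (E.filter (fun e => e.1 = j)).card

/-- Number of edges spanning over the vertex `j`. -/
def overDeg (E : Multiset (ℕ × ℕ)) (j : ℕ) : ℕ :=
  (E.filter (fun e => e.1 < j ∧ j < e.2)).card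

/-- The thickness of a multigraph on `{1,…,s}`: the maximum over interior
vertices `j = 2,…,s-1` of the number of edges spanning over `j`. -/
def thick (E : Multiset (ℕ × ℕ)) (s : ℕ) : ℕ :=
  (Finset.Icc 2 (s - 1)).sup (fun j => overDeg E j)

/-! ### Auxiliary machinery -/

/-- The sorted list consisting of `f j` copies of each `j ∈ [a, a+n)`. -/
def mkL (f : ℕ → ℕ) (a n : ℕ) : List ℕ :=
  (List.range' a n).flatMap (fun j => List.replicate (f j) j)

lemma mkL_succ (f : ℕ → ℕ) (a n : ℕ) :
    mkL f a (n + 1) = List.replicate (f a) a ++ mkL f (a + 1) n := by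
  simp [mkL, List.range'_succ]

lemma mem_mkL {f : ℕ → ℕ} {a n x : ℕ} (h : x ∈ mkL f a n) : a ≤ x ∧ x < a + n := by
  obtain ⟨j, hj, hx⟩ := List.mem_flatMap.1 h
  rw [List.eq_of_mem_replicate hx]
  exact List.mem_range'_1.1 hj

lemma sorted_replicate (m a : ℕ) : (List.replicate m a).Pairwise (· ≤ ·) := by
  induction m with
  | zero => simp
  | succ m ih =>
    rw [List.replicate_succ]
    refine List.pairwise_cons.2 ⟨?_, ih⟩
    intro b hb
    rw [List.eq_of_mem_replicate hb]

lemma sorted_mkL (f : ℕ → ℕ) (a n : ℕ) : (mkL f a n).Pairwise (· ≤ ·) := by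
  induction n generalizing a with
  | zero => simp [mkL]
  | succ n ih =>
    rw [mkL_succ, List.pairwise_append]
    refine ⟨sorted_replicate _ _, ih _, ?_⟩
    intro x hx y hy
    rw [List.eq_of_mem_replicate hx]
    exact le_trans (Nat.le_succ a) (mem_mkL hy).1

lemma countP_replicate (p : ℕ → Bool) (m a : ℕ) :
    (List.replicate m a).countP p = if p a then m else 0 := by
  induction m with
  | zero => simp
  | succ m ih =>
    rw [List.replicate_succ, List.countP_cons, ih]
    by_cases h : p a <;> simp [h]

lemma countP_mkL (p : ℕ → Bool) (f : ℕ → ℕ) (a n : ℕ) :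
    (mkL f a n).countP p = ∑ j ∈ Finset.Ico a (a + n), if p j then f j else 0 := by
  induction n generalizing a with
  | zero => simp [mkL]
  | succ n ih =>
    rw [mkL_succ, List.countP_append, countP_replicate, ih,
      Finset.sum_eq_sum_Ico_succ_bot (by omega : a < a + (n + 1))]
    have h : a + 1 + n = a + (n + 1) := by omega
    rw [h, add_comm]

lemma length_mkL (f : ℕ → ℕ) (a n : ℕ) :
    (mkL f a n).length = ∑ j ∈ Finset.Ico a (a + n), f j := by
  have h := countP_mkL (fun _ => true) f a n
  simpa using h

lemma countP_lt_mkL (f : ℕ → ℕ) (a n c : ℕ) (hc : c ≤ a + n) :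
    (mkL f a n).countP (fun x => decide (x < c)) = ∑ j ∈ Finset.Ico a c, f j := by
  rw [countP_mkL]
  rw [← Finset.sum_subset (Finset.Ico_subset_Ico le_rfl hc)
      (fun x hx hnx => by
        simp only [Finset.mem_Ico] at hx hnx
        have : ¬ x < c := by omega
        simp [this])]
  refine Finset.sum_congr rfl (fun j hj => ?_)
  simp only [Finset.mem_Ico] at hj
  simp [hj.2]

lemma countP_le_mkL (f : ℕ → ℕ) (a n c : ℕ) (hc : c + 1 ≤ a + n) :
    (mkL f a n).countP (fun x => decide (x ≤ c)) = ∑ j ∈ Finset.Ico a (c + 1), f j := by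
  rw [countP_mkL]
  rw [← Finset.sum_subset (Finset.Ico_subset_Ico le_rfl hc)
      (fun x hx hnx => by
        simp only [Finset.mem_Ico] at hx hnx
        have : ¬ x ≤ c := by omega
        simp [this])]
  refine Finset.sum_congr rfl (fun j hj => ?_)
  simp only [Finset.mem_Ico] at hj
  have : j ≤ c := by omega
  simp [this]

lemma countP_eq_mkL (f : ℕ → ℕ) (a n j : ℕ) (hj1 : a ≤ j) (hj2 : j < a + n) :
    (mkL f a n).countP (fun x => decide (x = j)) = f j := by
  rw [countP_mkL]
  have h : ∀ j' ∈ Finset.Ico a (a + n),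
      (if decide (j' = j) then f j' else 0) = if j' = j then f j' else 0 := by
    intro j' _
    by_cases h : j' = j <;> simp [h]
  rw [Finset.sum_congr rfl h, Finset.sum_ite_eq' (Finset.Ico a (a + n)) j f,
    if_pos (Finset.mem_Ico.2 ⟨hj1, hj2⟩)]

lemma sorted_countP_le {L : List ℕ} (hL : L.Pairwise (· ≤ ·)) {i c : ℕ}
    (hi : i < L.length) (h : c ≤ L[i]) :
    L.countP (fun x => decide (x < c)) ≤ i := by
  have hsplit : L.countP (fun x => decide (x < c)) =
      (L.take i).countP (fun x => decide (x < c)) +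
      (L.drop i).countP (fun x => decide (x < c)) := by
    rw [← List.countP_append, List.take_append_drop]
  have h2 : (L.drop i).countP (fun x => decide (x < c)) = 0 := by
    rw [List.countP_eq_zero]
    intro x hx
    obtain ⟨m, hm, rfl⟩ := List.mem_iff_getElem.1 hx
    rw [List.getElem_drop]
    have hlen : i + m < L.length := by
      rw [List.length_drop] at hm; omega
    have hle : L[i] ≤ L[i + m] := by
      rcases Nat.eq_zero_or_pos m with h0 | h0
      · subst h0; simp
      · exact List.pairwise_iff_getElem.1 hL i (i + m) hi hlen (by omega)
    simp only [decide_eq_true_eq]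
    omega
  have h3 : (L.take i).countP (fun x => decide (x < c)) ≤ i :=
    le_trans List.countP_le_length (by simp)
  omega

lemma sorted_le_countP {L : List ℕ} (hL : L.Pairwise (· ≤ ·)) {i c : ℕ}
    (hi : i < L.length) (h : L[i] ≤ c) :
    i + 1 ≤ L.countP (fun x => decide (x ≤ c)) := by
  have hsplit : L.countP (fun x => decide (x ≤ c)) =
      (L.take (i + 1)).countP (fun x => decide (x ≤ c)) +
      (L.drop (i + 1)).countP (fun x => decide (x ≤ c)) := by
    rw [← List.countP_append, List.take_append_drop]
  have h1 : (L.take (i + 1)).countP (fun x => decide (x ≤ c)) = (L.take (i + 1)).length := by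
    rw [List.countP_eq_length]
    intro x hx
    obtain ⟨m, hm, rfl⟩ := List.mem_iff_getElem.1 hx
    have hm' : m < i + 1 := by
      rw [List.length_take] at hm; omega
    rw [List.getElem_take]
    have hle : L[m] ≤ L[i] := by
      rcases Nat.eq_or_lt_of_le (Nat.lt_succ_iff.1 hm') with h0 | h0
      · subst h0; exact le_rfl
      · exact List.pairwise_iff_getElem.1 hL m i (by omega) hi h0
    simp only [decide_eq_true_eq]
    omega
  have h2 : (L.take (i + 1)).length = i + 1 := by
    rw [List.length_take]; omega
  omega

lemma sum_card_filter (f : ℕ × ℕ → ℕ) (S : Finset ℕ) (E : Multiset (ℕ × ℕ)) :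
    ∑ j ∈ S, (E.filter (fun e => f e = j)).card = (E.filter (fun e => f e ∈ S)).card := by
  classical
  induction E using Multiset.induction with
  | empty => simp
  | cons a E ih =>
    simp only [Multiset.filter_cons, Multiset.card_add, Finset.sum_add_distrib, ih]
    have h1 : ∀ j : ℕ, Multiset.card (if f a = j then ({a} : Multiset (ℕ × ℕ)) else 0) =
        if f a = j then 1 else 0 := by
      intro j; split <;> simp
    have h2 : Multiset.card (if f a ∈ S then ({a} : Multiset (ℕ × ℕ)) else 0) =
        if f a ∈ S then 1 else 0 := by
      split <;> simp
    simp only [h1, h2, Finset.sum_ite_eq]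

lemma card_filter_add (E : Multiset (ℕ × ℕ)) (l : List (ℕ × ℕ)) (p : ℕ × ℕ → Prop)
    [DecidablePred p] :
    ((E + ↑l).filter p).card = (E.filter p).card + l.countP (fun e => decide (p e)) := by
  rw [Multiset.filter_add]
  simp [List.countP_eq_length_filter]

/-- A loopless multigraph `H` on `{1,…,s}` with all left and right degrees at most
`k+1` can be extended, by adding edges, to a multigraph `H̄` in which every vertex
`j ≠ 1` has left degree at least `k+1`, every vertex `j ≠ s` has right degree at
least `k+1`, and the total number of edges is at most `(k+1)(s-1) + t(H)`. -/
theorem stmt0 (s k : ℕ) (hs : 2 ≤ s) (E : Multiset (ℕ × ℕ))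
    (hE : ∀ e ∈ E, 1 ≤ e.1 ∧ e.1 < e.2 ∧ e.2 ≤ s)
    (hL : ∀ j, leftDeg E j ≤ k + 1) (hR : ∀ j, rightDeg E j ≤ k + 1) :
    ∃ E' : Multiset (ℕ × ℕ),
      E ≤ E' ∧
      (∀ e ∈ E', 1 ≤ e.1 ∧ e.1 < e.2 ∧ e.2 ≤ s) ∧
      (∀ j, 2 ≤ j → j ≤ s → k + 1 ≤ leftDeg E' j) ∧
      (∀ j, 1 ≤ j → j ≤ s - 1 → k + 1 ≤ rightDeg E' j) ∧
      Multiset.card E' ≤ (k + 1) * (s - 1) + thick E s := by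
  classical
  set t := thick E s with htdef
  set A : List ℕ := mkL (fun j => k + 1 - rightDeg E j) 1 (s - 1) with hAdef
  set B : List ℕ := mkL (fun j => k + 1 - leftDeg E j) 2 (s - 1) with hBdef
  have hs1 : 1 + (s - 1) = s := by omega
  have hs2 : 2 + (s - 1) = s + 1 := by omega
  have hAsorted : A.Pairwise (· ≤ ·) := sorted_mkL _ _ _
  have hBsorted : B.Pairwise (· ≤ ·) := sorted_mkL _ _ _
  have hAmem : ∀ x ∈ A, 1 ≤ x ∧ x < s := by
    intro x hx; have := mem_mkL hx; omega
  have hBmem : ∀ x ∈ B, 2 ≤ x ∧ x ≤ s := by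
    intro x hx; have := mem_mkL hx; omega
  -- sums of degrees as cardinalities of filters
  have SRf : ∀ b : ℕ, ∑ j ∈ Finset.Ico 1 b, rightDeg E j =
      (E.filter (fun e => e.1 < b)).card := by
    intro b
    rw [show (fun j => rightDeg E j) = fun j => (E.filter (fun e => e.1 = j)).card from rfl]
    rw [sum_card_filter (fun e => e.1) (Finset.Ico 1 b) E]
    congr 1
    refine Multiset.filter_congr (fun e he => ?_)
    have := hE e he
    simp only [Finset.mem_Ico]
    omega
  have SLf : ∀ b : ℕ, ∑ j ∈ Finset.Ico 2 (b + 1), leftDeg E j =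
      (E.filter (fun e => e.2 ≤ b)).card := by
    intro b
    rw [show (fun j => leftDeg E j) = fun j => (E.filter (fun e => e.2 = j)).card from rfl]
    rw [sum_card_filter (fun e => e.2) (Finset.Ico 2 (b + 1)) E]
    congr 1
    refine Multiset.filter_congr (fun e he => ?_)
    have := hE e he
    simp only [Finset.mem_Ico]
    omega
  have PsiF : ∀ b : ℕ, b ≤ s →
      A.countP (fun x => decide (x < b)) + (E.filter (fun e => e.1 < b)).card =
        (k + 1) * (b - 1) := by
    intro b hb
    rw [hAdef, countP_lt_mkL _ _ _ _ (by omega), ← SRf b, ← Finset.sum_add_distrib]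
    have h : ∀ j ∈ Finset.Ico 1 b, (k + 1 - rightDeg E j) + rightDeg E j = k + 1 := by
      intro j _; have := hR j; omega
    rw [Finset.sum_congr rfl h, Finset.sum_const, Nat.card_Ico, smul_eq_mul, mul_comm]
  have PhiF : ∀ b : ℕ, b ≤ s →
      B.countP (fun x => decide (x ≤ b)) + (E.filter (fun e => e.2 ≤ b)).card =
        (k + 1) * (b - 1) := by
    intro b hb
    rw [hBdef, countP_le_mkL _ _ _ _ (by omega), ← SLf b, ← Finset.sum_add_distrib]
    have h : ∀ j ∈ Finset.Ico 2 (b + 1), (k + 1 - leftDeg E j) + leftDeg E j = k + 1 := by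
      intro j _; have := hL j; omega
    rw [Finset.sum_congr rfl h, Finset.sum_const, Nat.card_Ico, smul_eq_mul,
      show b + 1 - 2 = b - 1 from by omega, mul_comm]
  have split : ∀ b : ℕ, (E.filter (fun e => e.1 < b)).card =
      (E.filter (fun e => e.2 ≤ b)).card + overDeg E b := by
    intro b
    have h0 : E.filter (fun e => e.1 < b) =
        (E.filter (fun e => e.1 < b)).filter (fun e => e.2 ≤ b) +
        (E.filter (fun e => e.1 < b)).filter (fun e => ¬ e.2 ≤ b) :=
      (Multiset.filter_add_not _ _).symm
    have h1 : (E.filter (fun e => e.1 < b)).filter (fun e => e.2 ≤ b) =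
        E.filter (fun e => e.2 ≤ b) := by
      rw [Multiset.filter_filter]
      refine Multiset.filter_congr (fun e he => ?_)
      have := hE e he
      constructor
      · exact fun h => h.1
      · exact fun h => ⟨h, by omega⟩
    have h2 : (E.filter (fun e => e.1 < b)).filter (fun e => ¬ e.2 ≤ b) =
        E.filter (fun e => e.1 < b ∧ b < e.2) := by
      rw [Multiset.filter_filter]
      refine Multiset.filter_congr (fun e he => ?_)
      constructor
      · exact fun h => ⟨h.2, by omega⟩
      · exact fun h => ⟨by omega, h.1⟩
    rw [overDeg, ← h1, ← h2, ← Multiset.card_add, ← h0]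
  have oLe : ∀ b : ℕ, 2 ≤ b → b ≤ s → overDeg E b ≤ t := by
    intro b hb1 hb2
    rcases Nat.lt_or_ge b s with hb | hb
    · exact Finset.le_sup (f := fun j => overDeg E j)
        (Finset.mem_Icc.2 ⟨hb1, by omega⟩)
    · have hbs : b = s := by omega
      subst hbs
      have : E.filter (fun e => e.1 < b ∧ b < e.2) = 0 := by
        rw [Multiset.filter_eq_nil]
        intro e he
        have := hE e he
        omega
      rw [overDeg, this]
      simp
  have key : ∀ b : ℕ, 2 ≤ b → b ≤ s →
      B.countP (fun x => decide (x ≤ b)) =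
        A.countP (fun x => decide (x < b)) + overDeg E b := by
    intro b hb1 hb2
    have h1 := PsiF b hb2
    have h2 := PhiF b hb2
    have h3 := split b
    omega
  -- cardinalities of A and B
  have hcardE1 : (E.filter (fun e => e.1 < s)).card = Multiset.card E := by
    congr 1
    rw [Multiset.filter_eq_self]
    intro e he; have := hE e he; omega
  have hcardE2 : (E.filter (fun e => e.2 ≤ s)).card = Multiset.card E := by
    congr 1
    rw [Multiset.filter_eq_self]
    intro e he; have := hE e he; omega
  have hAfull : A.countP (fun x => decide (x < s)) = A.length := by
    rw [List.countP_eq_length]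
    intro x hx
    have := hAmem x hx
    simp only [decide_eq_true_eq]
    omega
  have hBfull : B.countP (fun x => decide (x ≤ s)) = B.length := by
    rw [List.countP_eq_length]
    intro x hx
    have := hBmem x hx
    simp only [decide_eq_true_eq]
    omega
  have hAlen : A.length + Multiset.card E = (k + 1) * (s - 1) := by
    have := PsiF s le_rfl
    rw [hAfull, hcardE1] at this
    exact this
  have hBlen : B.length + Multiset.card E = (k + 1) * (s - 1) := by
    have := PhiF s le_rfl
    rw [hBfull, hcardE2] at this
    exact this
  have hAB : A.length = B.length := by omega
  -- the construction
  set C : List ℕ := B.drop t with hCdef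
  set M : List (ℕ × ℕ) := (A.take C.length).zip C with hMdef
  set tl : List (ℕ × ℕ) := (A.drop C.length).map (fun a => (a, s)) with htldef
  set hd : List (ℕ × ℕ) := (B.take t).map (fun b => (1, b)) with hhddef
  have hClen : C.length = B.length - t := by rw [hCdef, List.length_drop]
  have hCA : C.length ≤ A.length := by omega
  have hTakeLen : (A.take C.length).length = C.length := by
    rw [List.length_take]; omega
  have hMlen : M.length = C.length := by
    rw [hMdef, List.length_zip, hTakeLen, min_self]
  -- key: every zipped pair (a, b) has a < b
  have hMpair : ∀ (i : ℕ) (hi : i < M.length), M[i].1 < M[i].2 ∧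
      (1 ≤ M[i].1 ∧ M[i].2 ≤ s) := by
    intro i hi
    have hiC : i < C.length := by omega
    have hiA : i < A.length := by omega
    have hiB : t + i < B.length := by
      rw [hClen] at hiC; omega
    have hgetM : M[i] = (A[i], B[t + i]) := by
      simp only [hMdef, hCdef, List.getElem_zip, List.getElem_take, List.getElem_drop]
    have hbB : B[t + i] ∈ B := List.getElem_mem _
    have hb2 : 2 ≤ B[t + i] ∧ B[t + i] ≤ s := hBmem _ hbB
    have haA : A[i] ∈ A := List.getElem_mem _
    have ha1 : 1 ≤ A[i] ∧ A[i] < s := hAmem _ haA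
    rw [hgetM]
    refine ⟨?_, ha1.1, hb2.2⟩
    by_contra hab
    push_neg at hab  -- B[t+i] ≤ A[i]
    have h1 : A.countP (fun x => decide (x < B[t + i])) ≤ i :=
      sorted_countP_le hAsorted hiA hab
    have h2 : t + i + 1 ≤ B.countP (fun x => decide (x ≤ B[t + i])) :=
      sorted_le_countP hBsorted hiB le_rfl
    have h3 := key (B[t + i]) hb2.1 hb2.2
    have h4 := oLe (B[t + i]) hb2.1 hb2.2
    omega
  have hfsts : (M.map Prod.fst) ++ (tl.map Prod.fst) = A := by
    rw [hMdef, htldef, List.map_fst_zip (le_of_eq hTakeLen), List.map_map]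
    have h2 : List.map (Prod.fst ∘ fun a => (a, s)) (List.drop C.length A) =
        List.drop C.length A := List.map_id'' (fun x => rfl) _
    rw [h2, List.take_append_drop]
  have hsndsM : M.map Prod.snd = C := by
    rw [hMdef]
    exact List.map_snd_zip (le_of_eq hTakeLen.symm)
  have hsndshd : hd.map Prod.snd = B.take t := by
    rw [hhddef, List.map_map]
    exact List.map_id'' (fun x => rfl) _
  refine ⟨E + ↑(M ++ tl ++ hd), Multiset.le_add_right _ _, ?_, ?_, ?_, ?_⟩
  · -- validity of edges
    intro e he
    rw [Multiset.mem_add] at he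
    rcases he with he | he
    · exact hE e he
    rw [Multiset.mem_coe, List.mem_append, List.mem_append] at he
    rcases he with (he | he) | he
    · obtain ⟨i, hi, rfl⟩ := List.mem_iff_getElem.1 he
      have := hMpair i hi
      exact ⟨this.2.1, this.1, this.2.2⟩
    · rw [htldef, List.mem_map] at he
      obtain ⟨a, ha, rfl⟩ := he
      have := hAmem a (List.mem_of_mem_drop ha)
      exact ⟨this.1, this.2, le_rfl⟩
    · rw [hhddef, List.mem_map] at he
      obtain ⟨b, hb, rfl⟩ := he
      have := hBmem b (List.mem_of_mem_take hb)
      exact ⟨le_rfl, by omega, this.2⟩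
  · -- left degrees
    intro j hj1 hj2
    rw [leftDeg, card_filter_add]
    have hcnt : (M ++ tl ++ hd).countP (fun e => decide (e.2 = j)) =
        M.countP (fun e => decide (e.2 = j)) + tl.countP (fun e => decide (e.2 = j)) +
        hd.countP (fun e => decide (e.2 = j)) := by
      rw [List.countP_append, List.countP_append]
    have hM2 : M.countP (fun e => decide (e.2 = j)) =
        C.countP (fun x => decide (x = j)) := by
      have h := congrArg (List.countP (fun x => decide (x = j))) hsndsM
      rw [List.countP_map] at h
      exact h
    have hhd2 : hd.countP (fun e => decide (e.2 = j)) =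
        (B.take t).countP (fun x => decide (x = j)) := by
      have h := congrArg (List.countP (fun x => decide (x = j))) hsndshd
      rw [List.countP_map] at h
      exact h
    have hBj : (B.take t).countP (fun x => decide (x = j)) +
        C.countP (fun x => decide (x = j)) = k + 1 - leftDeg E j := by
      rw [hCdef, ← List.countP_append, List.take_append_drop]
      rw [hBdef]
      exact countP_eq_mkL _ _ _ _ hj1 (by omega)
    have hLj := hL j
    rw [hcnt, hM2, hhd2]
    have : leftDeg E j = (Multiset.filter (fun e => e.2 = j) E).card := rfl
    omega
  · -- right degrees
    intro j hj1 hj2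
    rw [rightDeg, card_filter_add]
    have hcnt : (M ++ tl ++ hd).countP (fun e => decide (e.1 = j)) =
        M.countP (fun e => decide (e.1 = j)) + tl.countP (fun e => decide (e.1 = j)) +
        hd.countP (fun e => decide (e.1 = j)) := by
      rw [List.countP_append, List.countP_append]
    have hA2 : M.countP (fun e => decide (e.1 = j)) + tl.countP (fun e => decide (e.1 = j)) =
        A.countP (fun x => decide (x = j)) := by
      have h := congrArg (List.countP (fun x => decide (x = j))) hfsts
      rw [List.countP_append, List.countP_map, List.countP_map] at h
      exact h
    have hAj : A.countP (fun x => decide (x = j)) = k + 1 - rightDeg E j := by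
      rw [hAdef]
      exact countP_eq_mkL _ _ _ _ hj1 (by omega)
    have hRj := hR j
    rw [hcnt]
    have : rightDeg E j = (Multiset.filter (fun e => e.1 = j) E).card := rfl
    omega
  · -- cardinality
    rw [Multiset.card_add, Multiset.coe_card]
    rw [List.length_append, List.length_append]
    have h1 : tl.length = A.length - C.length := by
      rw [htldef, List.length_map, List.length_drop]
    have h2 : hd.length = min t B.length := by
      rw [hhddef, List.length_map, List.length_take]
    have h3 : min t B.length ≤ t := min_le_left _ _
    omega
end

section
/- In a network where for each i in {1,...,s} there is a vertex i^+ with an arc from source a of capacity k+1 − d^right(i), a vertex i^- with an arc to sink b of capacity k+1 − d^left(i), and an arc (i^+, j^-) of infinite capacity for every i < j, every finite-capacity a-b cut has the form S_i = {a} ∪ {x^+ : x ≥ i} ∪ {x^- : x > i} up to capacity, and the capacity of S_i equals (s−1)(k+1) − Σ_{j<i} d^right(j) − Σ_{j>i} d^left(j). -/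
lemma inf_zero (s INF i : ℕ) :
    (∑ x ∈ Finset.Icc i s, ∑ j ∈ (Finset.Icc 1 s) \ (Finset.Icc (i + 1) s),
      if x < j then INF else 0) = 0 := by
  apply Finset.sum_eq_zero
  intro x hx
  apply Finset.sum_eq_zero
  intro j hj
  simp only [Finset.mem_Icc, Finset.mem_sdiff, not_and, not_le] at hx hj
  have : ¬ x < j := by omega
  simp [this]

lemma sum_compl (m k : ℕ) (d : ℕ → ℕ) (hd : ∀ i, d i ≤ k + 1) (T : Finset ℕ)
    (hT : T.card = m) :
    (∑ j ∈ T, (k + 1 - d j)) + (∑ j ∈ T, d j) = m * (k + 1) := by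
  rw [← Finset.sum_add_distrib,
    Finset.sum_congr rfl (fun j _ => Nat.sub_add_cancel (hd j)),
    Finset.sum_const, hT, smul_eq_mul]


/-- An `a`-`b` cut in the auxiliary flow network is determined by the sets
`A = {i : i⁺ ∈ S}` and `B = {j : j⁻ ∈ S}` of plus- and minus-vertices on the
source side.  Its capacity is the total capacity of arcs leaving `S`:
the arcs `a → i⁺` with `i ∉ A` (capacity `k+1 − d^right(i)`), the arcs
`j⁻ → b` with `j ∈ B` (capacity `k+1 − d^left(j)`), and the arcs `i⁺ → j⁻`
(`i < j`) with `i ∈ A`, `j ∉ B` (capacity `INF`). -/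
def cutCap (s k : ℕ) (dr dl : ℕ → ℕ) (INF : ℕ) (A B : Finset ℕ) : ℕ :=
  (∑ i ∈ (Finset.Icc 1 s) \ A, (k + 1 - dr i)) +
  (∑ j ∈ B, (k + 1 - dl j)) +
  (∑ i ∈ A, ∑ j ∈ (Finset.Icc 1 s) \ B, if i < j then INF else 0)

/-- In the network with source arcs `a → i⁺` of capacity `k+1 − d^right(i)`,
sink arcs `i⁻ → b` of capacity `k+1 − d^left(i)`, and infinite-capacity arcs
`i⁺ → j⁻` for `i < j`: every cut of finite capacity (i.e. of capacity not
exceeding `(s−1)(k+1)`, so that no infinite arc crosses it) has capacity at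
least that of some cut `S_i = {a} ∪ {x⁺ : x ≥ i} ∪ {x⁻ : x > i}`, and the
capacity of `S_i` equals `(s−1)(k+1) − Σ_{j<i} d^right(j) − Σ_{j>i} d^left(j)`. -/
theorem stmt10 (s k : ℕ) (hs : 1 ≤ s) (dr dl : ℕ → ℕ)
    (hdr : ∀ i, dr i ≤ k + 1) (hdl : ∀ i, dl i ≤ k + 1)
    (INF : ℕ) (hINF : (s - 1) * (k + 1) < INF) :
    (∀ A B : Finset ℕ, A ⊆ Finset.Icc 1 s → B ⊆ Finset.Icc 1 s →
        cutCap s k dr dl INF A B ≤ (s - 1) * (k + 1) →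
        ∃ i ∈ Finset.Icc 1 s,
          cutCap s k dr dl INF (Finset.Icc i s) (Finset.Icc (i + 1) s) ≤
            cutCap s k dr dl INF A B) ∧
    (∀ i ∈ Finset.Icc 1 s,
        cutCap s k dr dl INF (Finset.Icc i s) (Finset.Icc (i + 1) s) =
          (s - 1) * (k + 1) -
            ((∑ j ∈ Finset.Icc 1 (i - 1), dr j) +
              (∑ j ∈ Finset.Icc (i + 1) s, dl j))) := by
  constructor
  · intro A B hA hB hcap
    -- no infinite arc crosses the cut
    have hno : ∀ i ∈ A, ∀ j ∈ Finset.Icc 1 s \ B, ¬ i < j := by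
      intro i hi j hj hij
      have h1 : INF ≤ ∑ x ∈ A, ∑ y ∈ Finset.Icc 1 s \ B, if x < y then INF else 0 := by
        calc INF = (if i < j then INF else 0) := by simp [hij]
          _ ≤ ∑ y ∈ Finset.Icc 1 s \ B, if i < y then INF else 0 :=
              Finset.single_le_sum (f := fun y => if i < y then INF else 0)
                (fun _ _ => Nat.zero_le _) hj
          _ ≤ _ := Finset.single_le_sum
              (f := fun x => ∑ y ∈ Finset.Icc 1 s \ B, if x < y then INF else 0)
              (fun _ _ => Nat.zero_le _) hi
      have h2 : INF ≤ cutCap s k dr dl INF A B := by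
        unfold cutCap
        exact le_trans h1 (Nat.le_add_left _ _)
      omega
    rcases A.eq_empty_or_nonempty with rfl | hne
    · refine ⟨s, by simp [Finset.mem_Icc, hs], ?_⟩
      unfold cutCap
      rw [inf_zero]
      have hX : (∑ x ∈ Finset.Icc 1 s \ Finset.Icc s s, (k + 1 - dr x)) ≤
          ∑ x ∈ Finset.Icc 1 s \ (∅ : Finset ℕ), (k + 1 - dr x) :=
        Finset.sum_le_sum_of_subset (by intro x hx; simp at hx ⊢; omega)
      have hY : (Finset.Icc (s + 1) s) = (∅ : Finset ℕ) := by
        simp [Finset.Icc_eq_empty_of_lt]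
      rw [hY]
      simp only [Finset.sum_empty]
      omega
    · set i := A.min' hne with hidef
      have hiA : i ∈ A := A.min'_mem hne
      have hi1s : i ∈ Finset.Icc 1 s := hA hiA
      refine ⟨i, hi1s, ?_⟩
      have hsub1 : Finset.Icc 1 s \ Finset.Icc i s ⊆ Finset.Icc 1 s \ A := by
        intro x hx
        simp only [Finset.mem_sdiff, Finset.mem_Icc, not_and, not_le] at hx ⊢
        refine ⟨hx.1, fun hxA => ?_⟩
        have := A.min'_le x hxA
        omega
      have hsub2 : Finset.Icc (i + 1) s ⊆ B := by
        intro j hj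
        simp only [Finset.mem_Icc] at hj
        by_contra hjB
        have hjmem : j ∈ Finset.Icc 1 s \ B := by
          simp only [Finset.mem_sdiff, Finset.mem_Icc]
          exact ⟨⟨by omega, hj.2⟩, hjB⟩
        exact hno i hiA j hjmem (by omega)
      have hX : (∑ x ∈ Finset.Icc 1 s \ Finset.Icc i s, (k + 1 - dr x)) ≤
          ∑ x ∈ Finset.Icc 1 s \ A, (k + 1 - dr x) :=
        Finset.sum_le_sum_of_subset hsub1
      have hY : (∑ j ∈ Finset.Icc (i + 1) s, (k + 1 - dl j)) ≤
          ∑ j ∈ B, (k + 1 - dl j) :=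
        Finset.sum_le_sum_of_subset hsub2
      unfold cutCap
      rw [inf_zero]
      omega
  · intro i hi
    simp only [Finset.mem_Icc] at hi
    unfold cutCap
    rw [inf_zero]
    have hset : Finset.Icc 1 s \ Finset.Icc i s = Finset.Icc 1 (i - 1) := by
      ext x
      simp only [Finset.mem_sdiff, Finset.mem_Icc, not_and, not_le]
      omega
    rw [hset]
    have e1 := sum_compl (i - 1) k dr hdr (Finset.Icc 1 (i - 1))
      (by rw [Nat.card_Icc]; omega)
    have e2 := sum_compl (s - i) k dl hdl (Finset.Icc (i + 1) s)
      (by rw [Nat.card_Icc]; omega)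
    have e3 : (i - 1) * (k + 1) + (s - i) * (k + 1) = (s - 1) * (k + 1) := by
      rw [← add_mul]
      congr 1
      omega
    have p1 : (∑ j ∈ Finset.Icc 1 (i - 1), dr j) ≤ (i - 1) * (k + 1) := by omega
    omega
end
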